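/- With B(f) = f''' + 4q f' + 2q' f, F_{-1} = 1/2, F_{j+1}' = B(F_j), and φ_n = ∑_{i=0}^{n}(4λ)^{n-i}F_{i-1}, the equation B(φ_n) = 4λ φ_n' holds (for all λ) if and only if F_n is constant in x. -/

import Mathlib

/-- The operator `B f = f''' + 4 q f' + 2 q' f`. -/
noncomputable def Bop (q f : ℝ → ℝ) : ℝ → ℝ := fun x =>
  deriv (deriv (deriv f)) x + 4 * q x * deriv f x + 2 * deriv q x * f x

private lemma smooth_deriv {f : ℝ → ℝ} (hf : ContDiff ℝ (⊤:ℕ∞) f) : ContDiff ℝ (⊤:ℕ∞) (deriv f) :=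
  (contDiff_infty_iff_deriv.mp hf).2

private lemma deriv_sum_mul {s : Finset ℕ} {c : ℕ → ℝ} {f : ℕ → ℝ → ℝ}
    (hf : ∀ i, ContDiff ℝ (⊤:ℕ∞) (f i)) :
    deriv (fun x => ∑ i ∈ s, c i * f i x) = fun x => ∑ i ∈ s, c i * deriv (f i) x := by
  funext x
  rw [deriv_fun_sum fun i _ => (((hf i).differentiable (by simp) x).const_mul _)]
  exact Finset.sum_congr rfl fun i _ => deriv_const_mul _ ((hf i).differentiable (by simp) x)

private lemma Bop_sum (q : ℝ → ℝ) (s : Finset ℕ) (c : ℕ → ℝ) (F : ℕ → ℝ → ℝ)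
    (hF : ∀ j, ContDiff ℝ (⊤:ℕ∞) (F j)) (x : ℝ) :
    Bop q (fun x => ∑ i ∈ s, c i * F i x) x = ∑ i ∈ s, c i * Bop q (F i) x := by
  have d1 : deriv (fun x => ∑ i ∈ s, c i * F i x) = fun x => ∑ i ∈ s, c i * deriv (F i) x :=
    deriv_sum_mul hF
  have d2 : deriv (deriv (fun x => ∑ i ∈ s, c i * F i x))
      = fun x => ∑ i ∈ s, c i * deriv (deriv (F i)) x := by
    rw [d1]; exact deriv_sum_mul fun i => smooth_deriv (hF i)
  have d3 : deriv (deriv (deriv (fun x => ∑ i ∈ s, c i * F i x)))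
      = fun x => ∑ i ∈ s, c i * deriv (deriv (deriv (F i))) x := by
    rw [d2]; exact deriv_sum_mul fun i => smooth_deriv (smooth_deriv (hF i))
  simp only [Bop]
  rw [d3, d1, Finset.mul_sum, Finset.mul_sum, ← Finset.sum_add_distrib, ← Finset.sum_add_distrib]
  exact Finset.sum_congr rfl fun i _ => by ring

/-- Here `F i` denotes the conservation law `F_{i-1}` of the paper, so that
`F 0 = F_{-1} = 1/2`, `(F (j+1))' = B (F j)`, and `F_n = F (n+1)`. -/
theorem stmt_11 (q : ℝ → ℝ) (hq : ContDiff ℝ (⊤ : ℕ∞) q) (F : ℕ → ℝ → ℝ)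
    (hF : ∀ j, ContDiff ℝ (⊤ : ℕ∞) (F j))
    (hF0 : F 0 = fun _ => (1 : ℝ) / 2)
    (hFrec : ∀ j x, deriv (F (j + 1)) x = Bop q (F j) x)
    (n : ℕ) (φ : ℝ → ℝ → ℝ)
    (hφ : φ = fun lam x => ∑ i ∈ Finset.range (n + 1), (4 * lam) ^ (n - i) * F i x) :
    (∀ lam x, Bop q (φ lam) x = 4 * lam * deriv (φ lam) x) ↔
      (∃ c : ℝ, ∀ x, F (n + 1) x = c) := by
  subst hφ
  replace hF : ∀ j, ContDiff ℝ (⊤:ℕ∞) (F j) := fun j => (hF j).of_le (by simp)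
  have g0 : ∀ x, deriv (F 0) x = 0 := by intro x; rw [hF0]; simp
  have key : ∀ lam x, Bop q (fun x => ∑ i ∈ Finset.range (n + 1), (4 * lam) ^ (n - i) * F i x) x
      = 4 * lam * deriv (fun x => ∑ i ∈ Finset.range (n + 1), (4 * lam) ^ (n - i) * F i x) x
        + deriv (F (n + 1)) x := by
    intro lam x
    rw [Bop_sum q _ _ F hF x, deriv_sum_mul hF]
    set a := 4 * lam with ha
    have lhs : ∑ i ∈ Finset.range (n + 1), a ^ (n - i) * Bop q (F i) x
        = ∑ i ∈ Finset.range n, a ^ (n - i) * deriv (F (i + 1)) x + deriv (F (n + 1)) x := by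
      rw [Finset.sum_range_succ, Nat.sub_self, pow_zero, one_mul, hFrec n x]
      congr 1
      exact Finset.sum_congr rfl fun i _ => by rw [hFrec i x]
    rw [lhs, Finset.mul_sum]
    rw [show ∑ i ∈ Finset.range (n + 1), a * (a ^ (n - i) * deriv (F i) x)
        = ∑ i ∈ Finset.range n, a * (a ^ (n - (i + 1)) * deriv (F (i + 1)) x)
          + a * (a ^ (n - 0) * deriv (F 0) x) from
      Finset.sum_range_succ' (fun i => a * (a ^ (n - i) * deriv (F i) x)) n]
    simp only [g0, mul_zero, add_zero]
    congr 1
    refine (Finset.sum_congr rfl fun i hi => ?_).symm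
    have hi' : i < n := Finset.mem_range.mp hi
    have : n - (i + 1) + 1 = n - i := by omega
    rw [← mul_assoc, ← pow_succ', this]
  constructor
  · intro h
    have hz : ∀ x, deriv (F (n + 1)) x = 0 := by
      intro x
      have := h 0 x
      rw [key 0 x] at this
      linarith
    exact ⟨F (n + 1) 0, fun x =>
      is_const_of_deriv_eq_zero ((hF (n + 1)).differentiable (by simp)) hz x 0⟩
  · rintro ⟨c, hc⟩ lam x
    have : F (n + 1) = fun _ => c := funext hc
    rw [key lam x, this]
    simp
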